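/- arXiv:1901.04279 — 2 statements merged into one kernel-verified Lean document; each statement's English description precedes it below -/
import Mathlib

section
/- The sum of two maximally monotone operators, one of which has full domain and is continuous and single-valued, is maximally monotone: if A: ℝ^d ⇉ ℝ^d is maximally monotone and B: ℝ^d → ℝ^d is monotone and continuous, then A + B is maximally monotone. -/
variable {d : ℕ}

/-- Monotonicity of a set-valued operator on Euclidean space. -/
def MonotoneOp (A : EuclideanSpace ℝ (Fin d) → Set (EuclideanSpace ℝ (Fin d))) : Prop :=
  ∀ x y u v, u ∈ A x → v ∈ A y → 0 ≤ (inner ℝ (u - v) (x - y) : ℝ)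

/-- Maximal monotonicity: monotone, and every monotonically related pair lies in the graph. -/
def MaxMonotoneOp (A : EuclideanSpace ℝ (Fin d) → Set (EuclideanSpace ℝ (Fin d))) : Prop :=
  MonotoneOp A ∧ ∀ x u, (∀ y v, v ∈ A y → 0 ≤ (inner ℝ (u - v) (x - y) : ℝ)) → u ∈ A x

section Aux

open RealInnerProductSpace

variable {F : Type*} [NormedAddCommGroup F] [InnerProductSpace ℝ F]

lemma inner_expand (a b c e : F) :
    ⟪a - b, c - e⟫ = ⟪a, c⟫ - ⟪a, e⟫ - ⟪b, c⟫ + ⟪b, e⟫ := by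
  simp [inner_sub_left, inner_sub_right]; ring

lemma le_of_forall_small (a b S : ℝ) (hS : 0 ≤ S)
    (h : ∀ t : ℝ, 0 < t → t ≤ 1 → a ≤ b + t * S) : a ≤ b := by
  apply le_of_forall_pos_le_add
  intro ε hε
  rcases eq_or_lt_of_le hS with hS0 | hS0
  · have := h 1 one_pos le_rfl
    rw [← hS0] at this
    linarith
  · rcases le_or_gt S ε with hle | hlt
    · have := h 1 one_pos le_rfl
      linarith
    · have ht : 0 < ε / S := div_pos hε hS0
      have ht1 : ε / S ≤ 1 := by
        rw [div_le_one hS0]; exact hlt.le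
      have := h (ε / S) ht ht1
      rw [div_mul_cancel₀ _ hS0.ne'] at this
      linarith

/-- The "pairing" `⟪z.2, z.1⟫` of a graph point. -/
def mpi (z : F × F) : ℝ := ⟪z.2, z.1⟫

/-- The Fitzpatrick coupling of a graph point `p` with `z`. -/
def mip (p z : F × F) : ℝ := ⟪p.2, z.1⟫ + ⟪z.2, p.1⟫ - ⟪p.2, p.1⟫

/-- Product-space inner product. -/
def minn (z w : F × F) : ℝ := ⟪z.1, w.1⟫ + ⟪z.2, w.2⟫

lemma mpi_sub_mip (p z : F × F) : mpi z - mip p z = ⟪z.2 - p.2, z.1 - p.1⟫ := by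
  rw [inner_expand]
  simp only [mpi, mip]
  ring

lemma mip_self (z : F × F) : mip z z = mpi z := by
  simp only [mip, mpi]; ring

lemma mip_cont (p : F × F) : Continuous (mip p) := by
  unfold mip
  exact ((continuous_const.inner continuous_fst).add
    (continuous_snd.inner continuous_const)).sub continuous_const

lemma mip_affine (p z z' : F × F) (t : ℝ) :
    mip p (z + t • (z' - z)) = mip p z + t * (mip p z' - mip p z) := by
  simp only [mip, Prod.fst_add, Prod.snd_add, Prod.smul_fst, Prod.smul_snd, Prod.fst_sub,
    Prod.snd_sub, inner_add_left, inner_add_right, real_inner_smul_left, real_inner_smul_right,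
    inner_sub_left, inner_sub_right]
  ring

/-- max of the first `n+1` Fitzpatrick couplings. -/
def Mfn (q : ℕ → F × F) : ℕ → (F × F) → ℝ
  | 0 => mip (q 0)
  | (n + 1) => fun z => max (Mfn q n z) (mip (q (n + 1)) z)

lemma Mfn_ge (q : ℕ → F × F) {i n : ℕ} (h : i ≤ n) (z : F × F) :
    mip (q i) z ≤ Mfn q n z := by
  induction n with
  | zero => simp_all [Mfn]
  | succ k ih =>
    rcases Nat.lt_or_ge i (k + 1) with h' | h'
    · exact le_trans (ih (Nat.lt_succ_iff.mp h')) (le_max_left _ _)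
    · have : i = k + 1 := le_antisymm h h'
      subst this
      exact le_max_right _ _

lemma Mfn_le (q : ℕ → F × F) {n : ℕ} {z : F × F} {c : ℝ}
    (h : ∀ i ≤ n, mip (q i) z ≤ c) : Mfn q n z ≤ c := by
  induction n with
  | zero => exact h 0 le_rfl
  | succ k ih =>
    exact max_le (ih fun i hi => h i (hi.trans (Nat.le_succ k))) (h (k + 1) le_rfl)

lemma Mfn_cont (q : ℕ → F × F) (n : ℕ) : Continuous (Mfn q n) := by
  induction n with
  | zero => exact mip_cont _
  | succ k ih => exact ih.max (mip_cont _)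

lemma Mfn_convex (q : ℕ → F × F) (n : ℕ) (z z' : F × F) {t : ℝ} (ht0 : 0 ≤ t) (ht1 : t ≤ 1) :
    Mfn q n (z + t • (z' - z)) ≤ (1 - t) * Mfn q n z + t * Mfn q n z' := by
  induction n with
  | zero =>
    simp only [Mfn, mip_affine]
    ring_nf
    rfl
  | succ k ih =>
    refine max_le (ih.trans ?_) ?_
    · have h1 : Mfn q k z ≤ Mfn q (k+1) z := le_max_left _ _
      have h2 : Mfn q k z' ≤ Mfn q (k+1) z' := le_max_left _ _
      nlinarith
    · rw [mip_affine]
      have h1 : mip (q (k+1)) z ≤ Mfn q (k+1) z := le_max_right _ _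
      have h2 : mip (q (k+1)) z' ≤ Mfn q (k+1) z' := le_max_right _ _
      nlinarith

lemma exists_global_min [FiniteDimensional ℝ F] (f : F × F → ℝ) (hf : Continuous f)
    (z₀ : F × F) (R : ℝ) (hsub : ∀ z, f z ≤ f z₀ → ‖z.1‖ ≤ R ∧ ‖z.2‖ ≤ R) :
    ∃ zb, (∀ z, f zb ≤ f z) ∧ f zb ≤ f z₀ := by
  have hK : IsCompact ((Metric.closedBall (0 : F) R) ×ˢ (Metric.closedBall (0 : F) R)) :=
    (isCompact_closedBall _ _).prod (isCompact_closedBall _ _)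
  have hz₀K : z₀ ∈ (Metric.closedBall (0 : F) R) ×ˢ (Metric.closedBall (0 : F) R) := by
    obtain ⟨h1, h2⟩ := hsub z₀ le_rfl
    exact ⟨by simpa [Metric.mem_closedBall, dist_zero_right] using h1,
      by simpa [Metric.mem_closedBall, dist_zero_right] using h2⟩
  obtain ⟨zb, hzbK, hmin⟩ := hK.exists_isMinOn ⟨z₀, hz₀K⟩ hf.continuousOn
  have hz₀min : f zb ≤ f z₀ := hmin hz₀K
  refine ⟨zb, fun z => ?_, hz₀min⟩
  rcases le_or_gt (f z) (f z₀) with h | h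
  · obtain ⟨h1, h2⟩ := hsub z h
    exact hmin ⟨by simpa [Metric.mem_closedBall, dist_zero_right] using h1,
      by simpa [Metric.mem_closedBall, dist_zero_right] using h2⟩
  · exact hz₀min.trans h.le

/-- quadratic form on the product. -/
noncomputable def mq (z : F × F) : ℝ := (‖z.1‖ ^ 2 + ‖z.2‖ ^ 2) / 2

lemma mq_nonneg (z : F × F) : 0 ≤ mq z := by
  unfold mq; positivity

lemma mq_cont : Continuous (mq (F := F)) := by
  unfold mq
  fun_prop

lemma q_expand (a b : F) (t : ℝ) : ‖a + t • b‖ ^ 2 = ‖a‖ ^ 2 + 2 * t * ⟪a, b⟫ + t ^ 2 * ‖b‖ ^ 2 := by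
  rw [norm_add_sq_real, real_inner_smul_right, norm_smul]
  simp only [Real.norm_eq_abs, mul_pow, sq_abs]
  ring

lemma mq_expand (z w : F × F) (t : ℝ) :
    mq (z + t • (w - z)) = mq z + t * minn z (w - z) + t ^ 2 * mq (w - z) := by
  have h1 : (z + t • (w - z)).1 = z.1 + t • (w.1 - z.1) := rfl
  have h2 : (z + t • (w - z)).2 = z.2 + t • (w.2 - z.2) := rfl
  unfold mq minn
  rw [h1, h2, q_expand, q_expand]
  simp only [Prod.fst_sub, Prod.snd_sub]
  ring

lemma mpi_cont : Continuous (mpi (F := F)) := by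
  unfold mpi
  exact continuous_snd.inner continuous_fst

lemma mip_cont_left (z : F × F) : Continuous fun p : F × F => mip p z := by
  unfold mip
  exact ((continuous_snd.inner continuous_const).add
    (continuous_const.inner continuous_fst)).sub (continuous_snd.inner continuous_fst)

lemma coercive_bound (X Y K C : ℝ) (hX : 0 ≤ X) (hY : 0 ≤ Y) (hK : 1 ≤ K)
    (h : X ^ 2 / 2 + Y ^ 2 / 2 ≤ C + K * X + K * Y) :
    X ≤ 2 * K + 2 * |C| + K ^ 2 + 1 := by
  by_contra h'
  push_neg at h'
  have hC1 : C ≤ |C| := le_abs_self C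
  have hC2 : 0 ≤ |C| := abs_nonneg C
  nlinarith [sq_nonneg (Y - K), sq_nonneg (X - 2 * K), mul_pos (lt_of_lt_of_le (by nlinarith) h'.le : (0:ℝ) < X) (sub_pos.mpr h' : (0:ℝ) < X - (2 * K + 2 * |C| + K ^ 2 + 1))]
lemma minty_zero [FiniteDimensional ℝ F] {A : F → Set F}
    (hmono : ∀ x y u v, u ∈ A x → v ∈ A y → 0 ≤ ⟪u - v, x - y⟫)
    (hmax : ∀ x u, (∀ y v, v ∈ A y → 0 ≤ ⟪u - v, x - y⟫) → u ∈ A x) :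
    ∃ x a, a ∈ A x ∧ x + a = 0 := by
  classical
  set G : Set (F × F) := {p | p.2 ∈ A p.1} with hGdef
  have hne : ∃ p : F × F, p ∈ G := by
    by_contra h
    push_neg at h
    exact h (0, 0) (hmax 0 0 fun y v hv => absurd hv (h (y, v)))
  have hmip : ∀ p z : F × F, p ∈ G → z ∈ G → mip p z ≤ mpi z := by
    intro p z hp hz
    have h0 := hmono z.1 p.1 z.2 p.2 hz hp
    rw [← mpi_sub_mip] at h0
    linarith
  have hwit : ∀ z : F × F, ∃ p : F × F, p ∈ G ∧ mpi z ≤ mip p z := by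
    intro z
    by_cases hz : z ∈ G
    · exact ⟨z, hz, by rw [mip_self]⟩
    · have h1 : ¬ ∀ y v, v ∈ A y → 0 ≤ ⟪z.2 - v, z.1 - y⟫ := fun h => hz (hmax _ _ h)
      push_neg at h1
      obtain ⟨y, v, hv, hlt⟩ := h1
      refine ⟨(y, v), hv, ?_⟩
      have h2 := mpi_sub_mip (y, v) z
      simp only at h2
      nlinarith [hlt, h2]
  haveI : Nonempty ↥G := ⟨⟨hne.choose, hne.choose_spec⟩⟩
  obtain ⟨g0, hg0⟩ := TopologicalSpace.exists_dense_seq ↥G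
  set q : ℕ → F × F := fun n => (g0 n : F × F) with hqdef
  have hqG : ∀ n, q n ∈ G := fun n => (g0 n).2
  set z₀ : F × F := q 0 with hz₀def
  set C : ℝ := mpi z₀ + mq z₀ with hCdef
  set K : ℝ := ‖z₀.1‖ + ‖z₀.2‖ + 1 with hKdef
  have hK1 : 1 ≤ K := by
    have := norm_nonneg z₀.1
    have := norm_nonneg z₀.2
    simp only [hKdef]; linarith
  set R : ℝ := 2 * K + 2 * |C + mpi z₀| + K ^ 2 + 1 with hRdef
  have hhz₀ : ∀ n, Mfn q n z₀ + mq z₀ ≤ C := fun n => by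
    have h0 : Mfn q n z₀ ≤ mpi z₀ :=
      Mfn_le q (n := n) (z := z₀) (c := mpi z₀) fun i _ => hmip (q i) z₀ (hqG i) (hqG 0)
    simp only [hCdef]; linarith
  -- coercivity
  have hcoer : ∀ n (z : F × F), Mfn q n z + mq z ≤ C → ‖z.1‖ ≤ R ∧ ‖z.2‖ ≤ R := by
    intro n z hz
    have h1 : mip (q 0) z ≤ Mfn q n z := Mfn_ge q (Nat.zero_le n) z
    have h2 : -(‖z₀.2‖ * ‖z.1‖) - ‖z₀.1‖ * ‖z.2‖ - mpi z₀ ≤ mip (q 0) z := by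
      have e1 := abs_real_inner_le_norm z₀.2 z.1
      have e2 := abs_real_inner_le_norm z.2 z₀.1
      have e3 : |⟪z₀.2, z.1⟫| ≤ ‖z₀.2‖ * ‖z.1‖ := e1
      have e4 : |⟪z.2, z₀.1⟫| ≤ ‖z.2‖ * ‖z₀.1‖ := e2
      have := neg_abs_le ⟪z₀.2, z.1⟫
      have := neg_abs_le ⟪z.2, z₀.1⟫
      simp only [mip, mpi, ← hz₀def]
      nlinarith
    have hq2 : mq z = ‖z.1‖ ^ 2 / 2 + ‖z.2‖ ^ 2 / 2 := by simp only [mq]; ring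
    have hmain : ‖z.1‖ ^ 2 / 2 + ‖z.2‖ ^ 2 / 2 ≤ (C + mpi z₀) + K * ‖z.1‖ + K * ‖z.2‖ := by
      have hn1 : ‖z₀.2‖ * ‖z.1‖ ≤ K * ‖z.1‖ := by
        apply mul_le_mul_of_nonneg_right _ (norm_nonneg _)
        simp only [hKdef]
        have := norm_nonneg z₀.1
        linarith
      have hn2 : ‖z₀.1‖ * ‖z.2‖ ≤ K * ‖z.2‖ := by
        apply mul_le_mul_of_nonneg_right _ (norm_nonneg _)
        simp only [hKdef]
        have := norm_nonneg z₀.2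
        linarith
      rw [← hq2]
      linarith
    constructor
    · exact coercive_bound _ ‖z.2‖ _ _ (norm_nonneg _) (norm_nonneg _) hK1 hmain
    · have hmain' : ‖z.2‖ ^ 2 / 2 + ‖z.1‖ ^ 2 / 2 ≤ (C + mpi z₀) + K * ‖z.2‖ + K * ‖z.1‖ := by
        linarith
      exact coercive_bound _ ‖z.1‖ _ _ (norm_nonneg _) (norm_nonneg _) hK1 hmain'
  -- minimizers
  have hmin : ∀ n : ℕ, ∃ zb : F × F, (∀ z, Mfn q n zb + mq zb ≤ Mfn q n z + mq z) ∧
      ‖zb.1‖ ≤ R ∧ ‖zb.2‖ ≤ R := by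
    intro n
    obtain ⟨zb, hzb1, hzb2⟩ := exists_global_min (fun z => Mfn q n z + mq z)
      ((Mfn_cont q n).add mq_cont) z₀ R
      (fun z hz => hcoer n z (hz.trans (hhz₀ n)))
    exact ⟨zb, hzb1, hcoer n zb (hzb2.trans (hhz₀ n))⟩
  choose zb hzbmin hzb1 hzb2 using hmin
  -- the star inequality at stage n
  have star_n : ∀ n i j, i ≤ n → j ≤ n →
      mip (q i) (zb n) ≤ mpi (q j) + minn (zb n) (q j - zb n) := by
    intro n i j hi hj
    refine (Mfn_ge q hi (zb n)).trans ?_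
    apply le_of_forall_small _ _ (mq (q j - zb n)) (mq_nonneg _)
    intro t ht0 ht1
    have h1 := hzbmin n (zb n + t • (q j - zb n))
    have h2 := Mfn_convex q n (zb n) (q j) ht0.le ht1
    have h3 : Mfn q n (q j) ≤ mpi (q j) :=
      Mfn_le q fun i _ => hmip (q i) (q j) (hqG i) (hqG j)
    have h4 := mq_expand (zb n) (q j) t
    have h5 : t * Mfn q n (zb n) ≤ t * (mpi (q j) + minn (zb n) (q j - zb n) + t * mq (q j - zb n)) := by
      nlinarith
    have := (mul_le_mul_iff_right₀ ht0).mp h5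
    linarith
  -- pass to a convergent subsequence of minimizers
  have hbdd : Bornology.IsBounded ((Metric.closedBall (0 : F) R) ×ˢ (Metric.closedBall (0 : F) R)) :=
    Metric.isBounded_closedBall.prod Metric.isBounded_closedBall
  have hmem : ∀ n, zb n ∈ (Metric.closedBall (0 : F) R) ×ˢ (Metric.closedBall (0 : F) R) := by
    intro n
    exact ⟨by simpa [Metric.mem_closedBall, dist_zero_right] using hzb1 n,
      by simpa [Metric.mem_closedBall, dist_zero_right] using hzb2 n⟩
  obtain ⟨zl, _, φ, hφ, hconv⟩ := tendsto_subseq_of_bounded hbdd hmem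
  -- star inequality in the limit, on the dense sequence
  have star_lim : ∀ i j, mip (q i) zl ≤ mpi (q j) + minn zl (q j - zl) := by
    intro i j
    have hc1 : Continuous fun z : F × F => mip (q i) z := mip_cont _
    have hc2 : Continuous fun z : F × F => mpi (q j) + minn z (q j - z) :=
      continuous_const.add ((continuous_fst.inner (continuous_const.sub continuous_fst)).add
        (continuous_snd.inner (continuous_const.sub continuous_snd)))
    refine le_of_tendsto_of_tendsto ((hc1.tendsto zl).comp hconv) ((hc2.tendsto zl).comp hconv) ?_
    filter_upwards [Filter.eventually_ge_atTop (max i j)] with n hn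
    have hin : i ≤ φ n := le_trans (le_trans (le_max_left i j) hn) (hφ.le_apply)
    have hjn : j ≤ φ n := le_trans (le_trans (le_max_right i j) hn) (hφ.le_apply)
    exact star_n (φ n) i j hin hjn
  -- star inequality for all graph points by density
  have star_all : ∀ p r : F × F, p ∈ G → r ∈ G →
      mip p zl ≤ mpi r + minn zl (r - zl) := by
    have hcl : IsClosed {w : ↥G × ↥G |
        mip (w.1 : F × F) zl ≤ mpi (w.2 : F × F) + minn zl ((w.2 : F × F) - zl)} := by
      apply isClosed_le
      · exact (mip_cont_left zl).comp (continuous_subtype_val.comp continuous_fst)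
      · have : Continuous fun r : F × F => mpi r + minn zl (r - zl) :=
          (continuous_snd.inner continuous_fst).add
            ((continuous_const.inner (continuous_fst.sub continuous_const)).add
              (continuous_const.inner (continuous_snd.sub continuous_const)))
        exact this.comp (continuous_subtype_val.comp continuous_snd)
    have hdr : DenseRange (Prod.map g0 g0) := hg0.prodMap hg0
    intro p r hp hr
    have hsub : Set.range (Prod.map g0 g0) ⊆ {w : ↥G × ↥G |
        mip (w.1 : F × F) zl ≤ mpi (w.2 : F × F) + minn zl ((w.2 : F × F) - zl)} := by
      rintro w ⟨⟨i, j⟩, rfl⟩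
      exact star_lim i j
    have hx : (⟨⟨p, hp⟩, ⟨r, hr⟩⟩ : ↥G × ↥G) ∈ closure (Set.range (Prod.map g0 g0)) := by
      rw [hdr.closure_range]
      trivial
    exact (hcl.closure_subset_iff.mpr hsub) hx
  -- final algebra
  obtain ⟨p₀, hp₀, hw0⟩ := hwit zl
  obtain ⟨p₁, hp₁, hw1⟩ := hwit (-zl.2, -zl.1)
  have hS01 := star_all p₀ p₁ hp₀ hp₁
  have hw1' : mpi p₁ + ⟪zl.1, p₁.1⟫ + ⟪zl.2, p₁.2⟫ ≤ -⟪zl.1, zl.2⟫ := by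
    simp only [mpi, mip] at hw1 ⊢
    simp only [inner_neg_left, inner_neg_right] at hw1
    have c1 : ⟪zl.2, p₁.2⟫ = ⟪p₁.2, zl.2⟫ := real_inner_comm _ _
    linarith
  have hminn : minn zl (p₁ - zl) = ⟪zl.1, p₁.1⟫ - ‖zl.1‖ ^ 2 + ⟪zl.2, p₁.2⟫ - ‖zl.2‖ ^ 2 := by
    simp only [minn, Prod.fst_sub, Prod.snd_sub, inner_sub_right, real_inner_self_eq_norm_sq]
    ring
  have hnormsq : ‖zl.1 + zl.2‖ ^ 2 = ‖zl.1‖ ^ 2 + 2 * ⟪zl.1, zl.2⟫ + ‖zl.2‖ ^ 2 :=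
    norm_add_sq_real _ _
  have hmpis : mpi zl = ⟪zl.1, zl.2⟫ := real_inner_comm _ _
  have hsum0 : zl.1 + zl.2 = 0 := by
    have : ‖zl.1 + zl.2‖ ^ 2 ≤ 0 := by
      rw [hnormsq]
      rw [hminn] at hS01
      rw [hmpis] at hw0
      linarith
    have h0 : ‖zl.1 + zl.2‖ = 0 := by
      nlinarith [norm_nonneg (zl.1 + zl.2)]
    exact norm_eq_zero.mp h0
  -- membership
  have hrel : ∀ y v, v ∈ A y → 0 ≤ ⟪zl.2 - v, zl.1 - y⟫ := by
    intro y v hv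
    have hSp := star_all (y, v) p₁ hv hp₁
    rw [hminn] at hSp
    have h6 := mpi_sub_mip (y, v) zl
    simp only at h6
    rw [← h6]
    rw [hmpis]
    have : ‖zl.1 + zl.2‖ ^ 2 = 0 := by rw [hsum0]; simp
    rw [hnormsq] at this
    linarith
  exact ⟨zl.1, zl.2, hmax _ _ hrel, hsum0⟩

lemma graph_nonempty {A : F → Set F}
    (hmax : ∀ x u, (∀ y v, v ∈ A y → 0 ≤ ⟪u - v, x - y⟫) → u ∈ A x) :
    ∃ y v, v ∈ A y := by
  by_contra h
  push_neg at h
  exact h 0 0 (hmax 0 0 fun y v hv => absurd hv (h y v))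

lemma minty_surj [FiniteDimensional ℝ F] {A : F → Set F}
    (hmono : ∀ x y u v, u ∈ A x → v ∈ A y → 0 ≤ ⟪u - v, x - y⟫)
    (hmax : ∀ x u, (∀ y v, v ∈ A y → 0 ≤ ⟪u - v, x - y⟫) → u ∈ A x) (z : F) :
    ∃ x a, a ∈ A x ∧ x + a = z := by
  set A' : F → Set F := fun x => (fun a => a - z) '' A x with hA'
  have hmono' : ∀ x y u v, u ∈ A' x → v ∈ A' y → 0 ≤ ⟪u - v, x - y⟫ := by
    rintro x y u v ⟨a, ha, rfl⟩ ⟨b, hb, rfl⟩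
    have h0 := hmono x y a b ha hb
    have he : a - z - (b - z) = a - b := by abel
    rw [he]
    exact h0
  have hmax' : ∀ x u, (∀ y v, v ∈ A' y → 0 ≤ ⟪u - v, x - y⟫) → u ∈ A' x := by
    intro x u h
    have hmem : u + z ∈ A x := by
      apply hmax x (u + z)
      intro y v hv
      have h0 := h y (v - z) ⟨v, hv, rfl⟩
      have he : u - (v - z) = u + z - v := by abel
      rwa [he] at h0
    exact ⟨u + z, hmem, add_sub_cancel_right u z⟩
  obtain ⟨x, a, ha, hxa⟩ := minty_zero hmono' hmax'
  obtain ⟨a', ha', rfl⟩ := ha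
  refine ⟨x, a', ha', ?_⟩
  have h1 : x + a' - z = 0 := by rw [← hxa]; abel
  exact sub_eq_zero.mp h1

lemma resolventExists [FiniteDimensional ℝ F] {A : F → Set F}
    (hmono : ∀ x y u v, u ∈ A x → v ∈ A y → 0 ≤ ⟪u - v, x - y⟫)
    (hmax : ∀ x u, (∀ y v, v ∈ A y → 0 ≤ ⟪u - v, x - y⟫) → u ∈ A x)
    {lam : ℝ} (hl : 0 < lam) (w : F) :
    ∃ x a, a ∈ A x ∧ x + lam • a = w := by
  set A' : F → Set F := fun x => (fun a => lam • a) '' A x with hA'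
  have hmono' : ∀ x y u v, u ∈ A' x → v ∈ A' y → 0 ≤ ⟪u - v, x - y⟫ := by
    rintro x y u v ⟨a, ha, rfl⟩ ⟨b, hb, rfl⟩
    rw [← smul_sub, real_inner_smul_left]
    exact mul_nonneg hl.le (hmono x y a b ha hb)
  have hmax' : ∀ x u, (∀ y v, v ∈ A' y → 0 ≤ ⟪u - v, x - y⟫) → u ∈ A' x := by
    intro x u h
    have hmem : lam⁻¹ • u ∈ A x := by
      apply hmax x (lam⁻¹ • u)
      intro y v hv
      have h0 := h y (lam • v) ⟨v, hv, rfl⟩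
      have he : lam⁻¹ • (u - lam • v) = lam⁻¹ • u - v := by
        rw [smul_sub, smul_smul, inv_mul_cancel₀ hl.ne', one_smul]
      calc (0:ℝ) = lam⁻¹ * 0 := by ring
      _ ≤ lam⁻¹ * ⟪u - lam • v, x - y⟫ :=
        mul_le_mul_of_nonneg_left h0 (inv_nonneg.mpr hl.le)
      _ = ⟪lam⁻¹ • (u - lam • v), x - y⟫ := (real_inner_smul_left _ _ _).symm
      _ = ⟪lam⁻¹ • u - v, x - y⟫ := by rw [he]
    refine ⟨lam⁻¹ • u, hmem, ?_⟩
    show lam • lam⁻¹ • u = u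
    rw [smul_smul, mul_inv_cancel₀ hl.ne', one_smul]
  obtain ⟨x, a, ha, hxa⟩ := minty_surj hmono' hmax' w
  obtain ⟨a', ha', rfl⟩ := ha
  exact ⟨x, a', ha', hxa⟩

lemma cont_mono_max {B : F → F} (hm : ∀ x y, 0 ≤ ⟪B x - B y, x - y⟫) (hc : Continuous B) :
    ∀ x u, (∀ y, 0 ≤ ⟪u - B y, x - y⟫) → u = B x := by
  intro x u h
  have key : ∀ w : F, ⟪u - B x, w⟫ ≤ 0 := by
    intro w
    have h1 : ∀ t : ℝ, 0 < t → ⟪u - B (x + t • w), w⟫ ≤ 0 := by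
      intro t ht
      have h0 := h (x + t • w)
      have he : x - (x + t • w) = (-t) • w := by
        rw [neg_smul]
        abel
      rw [he, real_inner_smul_right] at h0
      nlinarith
    have hcont : Continuous fun t : ℝ => ⟪u - B (x + t • w), w⟫ :=
      (continuous_const.sub (hc.comp (continuous_const.add
        (continuous_id.smul continuous_const)))).inner continuous_const
    have h0 : Filter.Tendsto (fun t : ℝ => ⟪u - B (x + t • w), w⟫)
        (nhdsWithin 0 (Set.Ioi 0)) (nhds ⟪u - B (x + (0:ℝ) • w), w⟫) :=
      (hcont.tendsto 0).mono_left nhdsWithin_le_nhds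
    rw [zero_smul, add_zero] at h0
    exact le_of_tendsto h0 (eventually_nhdsWithin_of_forall fun t ht => h1 t ht)
  have h2 := key (u - B x)
  rw [real_inner_self_eq_norm_sq] at h2
  have h3 : ‖u - B x‖ = 0 := by nlinarith [norm_nonneg (u - B x)]
  have := norm_eq_zero.mp h3
  exact sub_eq_zero.mp this

lemma surj_of_cont_mono [FiniteDimensional ℝ F] {B : F → F}
    (hm : ∀ x y, 0 ≤ ⟪B x - B y, x - y⟫) (hc : Continuous B) (z : F) :
    ∃ x, x + B x = z := by
  have hmono : ∀ x y u v, u ∈ ({B x} : Set F) → v ∈ ({B y} : Set F) → 0 ≤ ⟪u - v, x - y⟫ := by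
    rintro x y u v rfl rfl
    exact hm x y
  have hmax : ∀ x u, (∀ y v, v ∈ ({B y} : Set F) → 0 ≤ ⟪u - v, x - y⟫) → u ∈ ({B x} : Set F) := by
    intro x u h
    have := cont_mono_max hm hc x u (fun y => h y (B y) rfl)
    simp [this]
  obtain ⟨x, a, ha, hxa⟩ := resolventExists hmono hmax one_pos z
  rw [Set.mem_singleton_iff] at ha
  subst ha
  rw [one_smul] at hxa
  exact ⟨x, hxa⟩

lemma sum_surj [FiniteDimensional ℝ F] {A : F → Set F}
    (hmono : ∀ x y u v, u ∈ A x → v ∈ A y → 0 ≤ ⟪u - v, x - y⟫)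
    (hmax : ∀ x u, (∀ y v, v ∈ A y → 0 ≤ ⟪u - v, x - y⟫) → u ∈ A x)
    {B : F → F} (hBm : ∀ x y, 0 ≤ ⟪B x - B y, x - y⟫) (hBc : Continuous B) (z : F) :
    ∃ x a, a ∈ A x ∧ x + (a + B x) = z := by
  classical
  set lam : ℕ → ℝ := fun n => (1 : ℝ) / (n + 1) with hlamdef
  have hlam_pos : ∀ n, 0 < lam n := fun n => by positivity
  have hres : ∀ (n : ℕ) (w : F), ∃ x a, a ∈ A x ∧ x + lam n • a = w := fun n w =>
    resolventExists hmono hmax (hlam_pos n) w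
  choose J Al hmem heq using hres
  have hJeq : ∀ n w, J n w = w - lam n • Al n w := fun n w => by
    rw [eq_sub_iff_add_eq]; exact heq n w
  -- strong monotonicity inequality for the Yosida approximation
  have hAl_key : ∀ n w w', lam n * ‖Al n w - Al n w'‖ ^ 2 ≤ ⟪Al n w - Al n w', w - w'⟫ := by
    intro n w w'
    have h0 := hmono (J n w) (J n w') (Al n w) (Al n w') (hmem n w) (hmem n w')
    have he : w - w' = (J n w - J n w') + lam n • (Al n w - Al n w') := by
      rw [hJeq n w, hJeq n w', smul_sub]
      abel
    rw [he, inner_add_right, real_inner_smul_right, real_inner_self_eq_norm_sq]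
    linarith
  have hAl_mono : ∀ n w w', 0 ≤ ⟪Al n w - Al n w', w - w'⟫ := fun n w w' =>
    le_trans (by positivity) (hAl_key n w w')
  have hAl_lip : ∀ n, Continuous (Al n) := by
    intro n
    have hlip : LipschitzWith (Real.toNNReal (1 / lam n)) (Al n) := by
      apply LipschitzWith.of_dist_le_mul
      intro w w'
      rw [dist_eq_norm, dist_eq_norm]
      have h0 := hAl_key n w w'
      have h1 := real_inner_le_norm (Al n w - Al n w') (w - w')
      have h2 : lam n * ‖Al n w - Al n w'‖ ^ 2 ≤ ‖Al n w - Al n w'‖ * ‖w - w'‖ :=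
        le_trans h0 h1
      rw [Real.coe_toNNReal _ (by positivity : (0:ℝ) ≤ 1 / lam n)]
      rcases eq_or_lt_of_le (norm_nonneg (Al n w - Al n w')) with hz | hz
      · rw [← hz]
        positivity
      · rw [div_mul_eq_mul_div, le_div_iff₀ (hlam_pos n)]
        nlinarith
    exact hlip.continuous
  have hAl_bound : ∀ n y v, v ∈ A y → ‖Al n y‖ ≤ ‖v‖ := by
    intro n y v hv
    have h0 := hmono (J n y) y (Al n y) v (hmem n y) hv
    have he : J n y - y = -(lam n • Al n y) := by
      rw [hJeq n y]
      abel
    rw [he, inner_neg_right, real_inner_smul_right] at h0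
    have h1 : ⟪Al n y - v, Al n y⟫ ≤ 0 := by
      have := hlam_pos n
      nlinarith
    rw [inner_sub_left, real_inner_self_eq_norm_sq] at h1
    have h2 : ⟪v, Al n y⟫ ≤ ‖v‖ * ‖Al n y‖ := real_inner_le_norm _ _
    rcases eq_or_lt_of_le (norm_nonneg (Al n y)) with hz | hz
    · rw [← hz]; exact norm_nonneg v
    · nlinarith
  -- solve the regularized problems
  have hCn : ∀ n, ∃ x, x + (Al n x + B x) = z := by
    intro n
    apply surj_of_cont_mono _ ((hAl_lip n).add hBc) z
    intro x y
    have h1 := hAl_mono n x y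
    have h2 := hBm x y
    have he : (Al n x + B x) - (Al n y + B y) = (Al n x - Al n y) + (B x - B y) := by abel
    rw [Pi.add_apply, Pi.add_apply, he, inner_add_left]
    linarith
  choose xs hxs using hCn
  -- uniform bound on the solutions
  obtain ⟨y₀, v₀, hv₀⟩ := graph_nonempty hmax
  set Rb : ℝ := ‖z‖ + ‖y₀‖ + ‖v₀‖ + ‖B y₀‖ with hRbdef
  have hbound : ∀ n, ‖xs n - y₀‖ ≤ Rb := by
    intro n
    have h1 := hAl_mono n (xs n) y₀
    have h2 := hBm (xs n) y₀
    have hsum : Al n (xs n) + B (xs n) = z - xs n := by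
      rw [← hxs n]; abel
    have h3 : 0 ≤ ⟪(z - xs n) - (Al n y₀ + B y₀), xs n - y₀⟫ := by
      rw [← hsum]
      have he : (Al n (xs n) + B (xs n)) - (Al n y₀ + B y₀)
          = (Al n (xs n) - Al n y₀) + (B (xs n) - B y₀) := by abel
      rw [he, inner_add_left]
      linarith
    have he2 : (z - xs n) - (Al n y₀ + B y₀)
        = (z - y₀ - Al n y₀ - B y₀) - (xs n - y₀) := by abel
    rw [he2, inner_sub_left, real_inner_self_eq_norm_sq] at h3
    have h4 : ⟪z - y₀ - Al n y₀ - B y₀, xs n - y₀⟫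
        ≤ ‖z - y₀ - Al n y₀ - B y₀‖ * ‖xs n - y₀‖ := real_inner_le_norm _ _
    have h5 : ‖z - y₀ - Al n y₀ - B y₀‖ ≤ Rb := by
      have e1 : ‖z - y₀ - Al n y₀ - B y₀‖ ≤ ‖z - y₀ - Al n y₀‖ + ‖B y₀‖ := norm_sub_le _ _
      have e2 : ‖z - y₀ - Al n y₀‖ ≤ ‖z - y₀‖ + ‖Al n y₀‖ := norm_sub_le _ _
      have e3 : ‖z - y₀‖ ≤ ‖z‖ + ‖y₀‖ := norm_sub_le _ _
      have e4 := hAl_bound n y₀ v₀ hv₀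
      simp only [hRbdef]
      linarith
    rcases eq_or_lt_of_le (norm_nonneg (xs n - y₀)) with hz | hz
    · rw [← hz]
      simp only [hRbdef]
      positivity
    · nlinarith
  -- convergent subsequence
  have hmemball : ∀ n, xs n ∈ Metric.closedBall y₀ Rb := by
    intro n
    rw [Metric.mem_closedBall, dist_eq_norm]
    exact hbound n
  obtain ⟨xbar, _, φ, hφ, hconv⟩ :=
    tendsto_subseq_of_bounded Metric.isBounded_closedBall hmemball
  -- limits of the various sequences
  have hBlim : Filter.Tendsto (fun k => B (xs (φ k))) Filter.atTop (nhds (B xbar)) :=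
    (hBc.tendsto xbar).comp hconv
  have hAn : ∀ n, Al n (xs n) = z - xs n - B (xs n) := by
    intro n
    rw [← hxs n]; abel
  have halim : Filter.Tendsto (fun k => Al (φ k) (xs (φ k))) Filter.atTop
      (nhds (z - xbar - B xbar)) := by
    have : (fun k => Al (φ k) (xs (φ k))) = fun k => z - xs (φ k) - B (xs (φ k)) := by
      funext k; exact hAn (φ k)
    rw [this]
    exact (tendsto_const_nhds.sub hconv).sub hBlim
  have hlam0 : Filter.Tendsto (fun k => lam (φ k)) Filter.atTop (nhds 0) := by
    have h0 : Filter.Tendsto lam Filter.atTop (nhds 0) := by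
      simp only [hlamdef]
      exact tendsto_one_div_add_atTop_nhds_zero_nat
    exact h0.comp hφ.tendsto_atTop
  have hJlim : Filter.Tendsto (fun k => J (φ k) (xs (φ k))) Filter.atTop (nhds xbar) := by
    have hJn : ∀ n, J n (xs n) = xs n - lam n • Al n (xs n) := fun n => hJeq n (xs n)
    have : (fun k => J (φ k) (xs (φ k)))
        = fun k => xs (φ k) - lam (φ k) • Al (φ k) (xs (φ k)) := by
      funext k; exact hJn (φ k)
    rw [this]
    have hsmul : Filter.Tendsto (fun k => lam (φ k) • Al (φ k) (xs (φ k))) Filter.atTop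
        (nhds ((0:ℝ) • (z - xbar - B xbar))) := hlam0.smul halim
    rw [zero_smul] at hsmul
    have := hconv.sub hsmul
    rwa [sub_zero] at this
  -- closed graph argument
  have hrel : ∀ y v, v ∈ A y → 0 ≤ ⟪(z - xbar - B xbar) - v, xbar - y⟫ := by
    intro y v hv
    have hn : ∀ k, 0 ≤ ⟪Al (φ k) (xs (φ k)) - v, J (φ k) (xs (φ k)) - y⟫ := fun k =>
      hmono _ _ _ _ (hmem (φ k) (xs (φ k))) hv
    have htend : Filter.Tendsto
        (fun k => ⟪Al (φ k) (xs (φ k)) - v, J (φ k) (xs (φ k)) - y⟫) Filter.atTop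
        (nhds ⟪(z - xbar - B xbar) - v, xbar - y⟫) :=
      (halim.sub tendsto_const_nhds).inner (hJlim.sub tendsto_const_nhds)
    exact le_of_tendsto_of_tendsto tendsto_const_nhds htend (Filter.Eventually.of_forall hn)
  exact ⟨xbar, z - xbar - B xbar, hmax _ _ hrel, by abel⟩

end Aux

theorem sum_maxMonotone_continuous
    (A : EuclideanSpace ℝ (Fin d) → Set (EuclideanSpace ℝ (Fin d)))
    (B : EuclideanSpace ℝ (Fin d) → EuclideanSpace ℝ (Fin d))
    (hA : MaxMonotoneOp A)
    (hBmono : ∀ x y, 0 ≤ (inner ℝ (B x - B y) (x - y) : ℝ))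
    (hBcont : Continuous B) :
    MaxMonotoneOp (fun x => (fun a => a + B x) '' A x) := by
  obtain ⟨hAm, hAx⟩ := hA
  constructor
  · rintro x y u v ⟨a, ha, rfl⟩ ⟨b, hb, rfl⟩
    have h1 := hAm x y a b ha hb
    have h2 := hBmono x y
    have he : a + B x - (b + B y) = (a - b) + (B x - B y) := by abel
    rw [he, inner_add_left]
    linarith
  · intro x u hrel
    obtain ⟨x', a', ha', hsum⟩ := sum_surj hAm hAx hBmono hBcont (x + u)
    have h0 := hrel x' (a' + B x') ⟨a', ha', rfl⟩
    have he : u - (a' + B x') = x' - x := by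
      have h4 : u - (a' + B x') - (x' - x) = (x + u) - (x' + (a' + B x')) := by abel
      rw [← hsum, sub_self] at h4
      exact sub_eq_zero.mp h4
    rw [he] at h0
    have h5 : (inner ℝ (x' - x) (x - x') : ℝ) = -‖x - x'‖ ^ 2 := by
      rw [show x' - x = -(x - x') from by abel, inner_neg_left, real_inner_self_eq_norm_sq]
    rw [h5] at h0
    have h6 : x = x' := by
      have h7 : ‖x - x'‖ = 0 := by nlinarith [norm_nonneg (x - x')]
      exact sub_eq_zero.mp (norm_eq_zero.mp h7)
    subst h6
    have h8 : a' + B x = u := add_left_cancel hsum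
    exact ⟨a', ha', h8⟩
end

section
/- Krasnosel'skiĭ–Mann convergence: if T: ℝ^d → ℝ^d is η-averaged with η ∈ (0,1), fix(T) ≠ ∅, and x^{k+1} = x^k + λ(T x^k − x^k) with λ ∈ (0, 1/η), then the sequence (x^k) converges to some point of fix(T). -/
variable {d : ℕ}

/-- Nonexpansive operator on Euclidean space. -/
def Nonexpansive (R : EuclideanSpace ℝ (Fin d) → EuclideanSpace ℝ (Fin d)) : Prop :=
  ∀ x y, ‖R x - R y‖ ≤ ‖x - y‖

/-- `T` is `η`-averaged: `T = (1-η)Id + ηR` with `R` nonexpansive, `η ∈ (0,1)`. -/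
def IsAveraged (T : EuclideanSpace ℝ (Fin d) → EuclideanSpace ℝ (Fin d)) (η : ℝ) : Prop :=
  η ∈ Set.Ioo (0 : ℝ) 1 ∧
  ∃ R, Nonexpansive R ∧ T = fun x => (1 - η) • x + η • R x

lemma km_key_identity (a b : EuclideanSpace ℝ (Fin d)) (μ : ℝ) :
    ‖(1-μ)•a + μ•b‖^2 = (1-μ)*‖a‖^2 + μ*‖b‖^2 - μ*(1-μ)*‖a-b‖^2 := by
  have h : ∀ v : EuclideanSpace ℝ (Fin d), ‖v‖^2 = inner ℝ v v := fun v =>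
    (real_inner_self_eq_norm_sq v).symm
  rw [h, h, h, h]
  simp only [inner_add_left, inner_add_right, inner_sub_left, inner_sub_right,
    real_inner_smul_left, real_inner_smul_right]
  rw [real_inner_comm b a]
  ring

theorem krasnoselskii_mann_convergence
    (T : EuclideanSpace ℝ (Fin d) → EuclideanSpace ℝ (Fin d)) (η lam : ℝ)
    (hT : IsAveraged T η) (hfix : ∃ p, T p = p)
    (hlam : lam ∈ Set.Ioo (0 : ℝ) (1 / η))
    (x : ℕ → EuclideanSpace ℝ (Fin d))
    (hiter : ∀ k, x (k + 1) = x k + lam • (T (x k) - x k)) :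
    ∃ p, T p = p ∧ Filter.Tendsto x Filter.atTop (nhds p) := by
  obtain ⟨⟨hη0, hη1⟩, R, hR, hTeq⟩ := hT
  obtain ⟨hlam0, hlam1⟩ := hlam
  set μ := lam * η with hμdef
  have hμ0 : 0 < μ := mul_pos hlam0 hη0
  have hμ1 : μ < 1 := by
    have := (lt_div_iff₀ hη0).mp hlam1
    simpa [hμdef] using this
  -- fixed points of T are fixed points of R
  have hfixRT : ∀ p, T p = p ↔ R p = p := by
    intro p
    rw [hTeq]
    constructor
    · intro h
      have heq : (1 - η) • p + η • R p = p := h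
      have h3 : η • (R p - p) = 0 := by
        have : η • (R p - p) = (1 - η) • p + η • R p - p := by module
        rw [this, heq, sub_self]
      rcases smul_eq_zero.mp h3 with h4 | h4
      · exact absurd h4 (ne_of_gt hη0)
      · exact sub_eq_zero.mp h4
    · intro h
      simp only [h]; module
  -- iteration in terms of R
  have hiterR : ∀ k, x (k + 1) = (1 - μ) • x k + μ • R (x k) := by
    intro k
    rw [hiter k, hTeq, hμdef]
    module
  -- Fejér monotonicity
  have fejer : ∀ p, R p = p → ∀ k,
      ‖x (k+1) - p‖^2 ≤ ‖x k - p‖^2 - μ*(1-μ)*‖R (x k) - x k‖^2 := by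
    intro p hp k
    have hstep : x (k+1) - p = (1-μ) • (x k - p) + μ • (R (x k) - p) := by
      rw [hiterR k]; module
    have hid := km_key_identity (x k - p) (R (x k) - p) μ
    have hab : (x k - p) - (R (x k) - p) = x k - R (x k) := by module
    rw [hab] at hid
    have hne : ‖R (x k) - p‖ ≤ ‖x k - p‖ := by
      have := hR (x k) p; rwa [hp] at this
    have hnorm : ‖x k - R (x k)‖ = ‖R (x k) - x k‖ := norm_sub_rev _ _
    have hsq : ‖R (x k) - p‖^2 ≤ ‖x k - p‖^2 := pow_le_pow_left₀ (norm_nonneg _) hne 2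
    rw [hstep, hid, hnorm]
    nlinarith [hsq, hμ0.le]
  have fejer' : ∀ p, R p = p → ∀ k, ‖x (k+1) - p‖ ≤ ‖x k - p‖ := by
    intro p hp k
    have h := fejer p hp k
    have h1 : 0 ≤ μ*(1-μ)*‖R (x k) - x k‖^2 := mul_nonneg (by nlinarith) (sq_nonneg _)
    nlinarith [norm_nonneg (x (k+1) - p), norm_nonneg (x k - p)]
  obtain ⟨p₀, hp₀⟩ := hfix
  have hp₀R : R p₀ = p₀ := (hfixRT p₀).mp hp₀
  -- antitone distance to p₀, squared version
  have hanti : ∀ p, R p = p → Antitone (fun k => ‖x k - p‖) := by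
    intro p hp
    exact antitone_nat_of_succ_le (fun k => fejer' p hp k)
  -- the squared distance converges
  have hantisq : Antitone (fun k => ‖x k - p₀‖^2) := by
    intro m n hmn
    exact pow_le_pow_left₀ (norm_nonneg _) (hanti p₀ hp₀R hmn) 2
  have hbdd : BddBelow (Set.range fun k => ‖x k - p₀‖^2) := by
    refine ⟨0, ?_⟩
    rintro _ ⟨k, rfl⟩
    exact sq_nonneg _
  have htend_f : Filter.Tendsto (fun k => ‖x k - p₀‖^2) Filter.atTop
      (nhds (⨅ k, ‖x k - p₀‖^2)) := tendsto_atTop_ciInf hantisq hbdd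
  -- residual tends to 0
  have hres : Filter.Tendsto (fun k => ‖R (x k) - x k‖) Filter.atTop (nhds 0) := by
    have hdiff : Filter.Tendsto (fun k => ‖x k - p₀‖^2 - ‖x (k+1) - p₀‖^2)
        Filter.atTop (nhds 0) := by
      have h2 : Filter.Tendsto (fun k => ‖x (k+1) - p₀‖^2) Filter.atTop
          (nhds (⨅ k, ‖x k - p₀‖^2)) :=
        htend_f.comp (Filter.tendsto_add_atTop_nat 1)
      simpa using htend_f.sub h2
    have hsq : Filter.Tendsto (fun k => ‖R (x k) - x k‖^2) Filter.atTop (nhds 0) := by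
      have hub : ∀ k, ‖R (x k) - x k‖^2 ≤
          (μ*(1-μ))⁻¹ * (‖x k - p₀‖^2 - ‖x (k+1) - p₀‖^2) := by
        intro k
        have h := fejer p₀ hp₀R k
        have hpos : 0 < μ*(1-μ) := by nlinarith
        rw [inv_mul_eq_div, le_div_iff₀ hpos]
        nlinarith [h]
      have hlb : ∀ k, (0:ℝ) ≤ ‖R (x k) - x k‖^2 := fun k => by positivity
      have hmain : Filter.Tendsto (fun k => (μ*(1-μ))⁻¹ *
          (‖x k - p₀‖^2 - ‖x (k+1) - p₀‖^2)) Filter.atTop (nhds 0) := by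
        simpa using hdiff.const_mul ((μ*(1-μ))⁻¹)
      exact squeeze_zero hlb hub hmain
    have := hsq.sqrt
    simpa [Real.sqrt_sq (norm_nonneg _)] using this
  -- boundedness and convergent subsequence
  have hball : ∀ k, x k ∈ Metric.closedBall p₀ (‖x 0 - p₀‖) := by
    intro k
    have : ‖x k - p₀‖ ≤ ‖x 0 - p₀‖ := hanti p₀ hp₀R (Nat.zero_le k)
    simpa [Metric.mem_closedBall, dist_eq_norm] using this
  obtain ⟨q, _, φ, hφ, hqlim⟩ :=
    tendsto_subseq_of_bounded Metric.isBounded_closedBall hball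
  -- R is continuous
  have hRcont : Continuous R := by
    have : LipschitzWith 1 R := LipschitzWith.of_dist_le_mul (fun a b => by
      simpa [dist_eq_norm, one_mul] using hR a b)
    exact this.continuous
  -- q is a fixed point of R
  have hqfix : R q = q := by
    have h1 : Filter.Tendsto (fun j => R (x (φ j))) Filter.atTop (nhds (R q)) :=
      (hRcont.tendsto q).comp hqlim
    have h2 : Filter.Tendsto (fun j => R (x (φ j)) - x (φ j)) Filter.atTop (nhds 0) := by
      have : Filter.Tendsto (fun j => ‖R (x (φ j)) - x (φ j)‖) Filter.atTop (nhds 0) :=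
        hres.comp hφ.tendsto_atTop
      exact tendsto_zero_iff_norm_tendsto_zero.mpr this
    have h3 : Filter.Tendsto (fun j => R (x (φ j))) Filter.atTop (nhds q) := by
      have := h2.add hqlim
      simpa using this
    exact tendsto_nhds_unique h1 h3
  -- distances to q converge to 0
  have hqanti := hanti q hqfix
  have hqbdd : BddBelow (Set.range fun k => ‖x k - q‖) := ⟨0, by
    rintro _ ⟨k, rfl⟩; exact norm_nonneg _⟩
  have htendq : Filter.Tendsto (fun k => ‖x k - q‖) Filter.atTop
      (nhds (⨅ k, ‖x k - q‖)) := tendsto_atTop_ciInf hqanti hqbdd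
  have hsub0 : Filter.Tendsto (fun j => ‖x (φ j) - q‖) Filter.atTop (nhds 0) := by
    have := (tendsto_iff_norm_sub_tendsto_zero.mp hqlim)
    simpa using this
  have hsubinf : Filter.Tendsto (fun j => ‖x (φ j) - q‖) Filter.atTop
      (nhds (⨅ k, ‖x k - q‖)) := htendq.comp hφ.tendsto_atTop
  have hinf0 : (⨅ k, ‖x k - q‖) = 0 := tendsto_nhds_unique hsubinf hsub0
  refine ⟨q, (hfixRT q).mpr hqfix, ?_⟩
  rw [tendsto_iff_norm_sub_tendsto_zero]
  rw [hinf0] at htendq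
  exact htendq
end
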